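/- arXiv:1902.00777 — 3 statements merged into one kernel-verified Lean document; each statement's English description precedes it below -/
import Mathlib

section
/- There exist infinitely many pairwise nonequivalent sets {a,b,c,d} of four distinct nonzero integers for which there exist two distinct nonzero integers n1, n2 such that {a,b,c,d} is both a D(n1)-quadruple and a D(n2)-quadruple. -/
def IsDQuadruple (a b c d n : ℤ) : Prop :=
  a ≠ b ∧ a ≠ c ∧ a ≠ d ∧ b ≠ c ∧ b ≠ d ∧ c ≠ d ∧
  a ≠ 0 ∧ b ≠ 0 ∧ c ≠ 0 ∧ d ≠ 0 ∧
  (∃ x : ℤ, a * b + n = x ^ 2) ∧ (∃ x : ℤ, a * c + n = x ^ 2) ∧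
  (∃ x : ℤ, a * d + n = x ^ 2) ∧ (∃ x : ℤ, b * c + n = x ^ 2) ∧
  (∃ x : ℤ, b * d + n = x ^ 2) ∧ (∃ x : ℤ, c * d + n = x ^ 2)

/-- Two quadruples (as finite sets of integers) are equivalent if one is obtained
from the other by scaling with a nonzero rational number. -/
def EquivQuad (s t : Finset ℤ) : Prop :=
  ∃ u : ℚ, u ≠ 0 ∧
    (fun a : ℤ => (a : ℚ) * u) '' (s : Set ℤ) = (fun a : ℤ => (a : ℚ)) '' (t : Set ℤ)

/- Auxiliary construction: solutions of the Pell-type equation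
   w^2 = 28 t^2 + 140 t + 169 (equivalently w^2 - 7 (2t+5)^2 = -6). -/
def pell : ℕ → ℤ × ℤ
  | 0 => (29, 3)
  | k+1 => (127 * (pell k).1 + 672 * (pell k).2 + 1680,
            24 * (pell k).1 + 127 * (pell k).2 + 315)

def ww (k : ℕ) : ℤ := (pell k).1
def tt (k : ℕ) : ℤ := (pell k).2

lemma ww_zero : ww 0 = 29 := rfl
lemma tt_zero : tt 0 = 3 := rfl
lemma ww_succ (k : ℕ) : ww (k+1) = 127 * ww k + 672 * tt k + 1680 := rfl
lemma tt_succ (k : ℕ) : tt (k+1) = 24 * ww k + 127 * tt k + 315 := rfl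

lemma pell_inv (k : ℕ) : (ww k) ^ 2 = 28 * (tt k) ^ 2 + 140 * (tt k) + 169 := by
  induction k with
  | zero => norm_num [ww_zero, tt_zero]
  | succ k ih =>
      rw [ww_succ, tt_succ]
      linear_combination ih

lemma pell_bounds (k : ℕ) : 29 ≤ ww k ∧ 3 ≤ tt k := by
  induction k with
  | zero => norm_num [ww_zero, tt_zero]
  | succ k ih =>
      rw [ww_succ, tt_succ]
      constructor <;> linarith [ih.1, ih.2]

lemma tt_lt_succ (k : ℕ) : tt k < tt (k+1) := by
  rw [tt_succ]
  linarith [(pell_bounds k).1, (pell_bounds k).2]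

lemma tt_strictMono : StrictMono tt := strictMono_nat_of_lt_succ tt_lt_succ

/-- The third element of the quadruple. -/
def cc (k : ℕ) : ℤ := 3 * (tt k) ^ 2 + 10 * (tt k) + 7
/-- The fourth element of the quadruple. -/
def dd (k : ℕ) : ℤ := 3 * (tt k) ^ 2 + 20 * (tt k) + 32

lemma cc_ge (k : ℕ) : 64 ≤ cc k := by
  have h := (pell_bounds k).2
  simp only [cc]
  nlinarith

lemma dd_ge (k : ℕ) : 119 ≤ dd k := by
  have h := (pell_bounds k).2
  simp only [dd]
  nlinarith

lemma cc_lt_dd (k : ℕ) : cc k < dd k := by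
  have h := (pell_bounds k).2
  simp only [cc, dd]
  linarith

lemma dd_mono {k l : ℕ} (h : k < l) : dd k < dd l := by
  have h1 := tt_strictMono h
  have h2 := (pell_bounds k).2
  simp only [dd]
  nlinarith

lemma cc_lt_dd_of_lt {k l : ℕ} (h : k < l) : cc k < dd l := lt_trans (cc_lt_dd k) (dd_mono h)

/-- The quadruple. -/
def qd (k : ℕ) : Finset ℤ := {-1, 7, cc k, dd k}

/-- The first value of n. -/
def nOne (k : ℕ) : ℤ := 4 * (tt k) ^ 2 + 20 * (tt k) + 32
/-- The second value of n. -/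
def nTwo (k : ℕ) : ℤ := 28 * (tt k) ^ 2 + 140 * (tt k) + 176

lemma quad_distinct (k : ℕ) :
    (-1 : ℤ) ≠ 7 ∧ (-1 : ℤ) ≠ cc k ∧ (-1 : ℤ) ≠ dd k ∧ (7 : ℤ) ≠ cc k ∧
      (7 : ℤ) ≠ dd k ∧ cc k ≠ dd k ∧ (-1 : ℤ) ≠ 0 ∧ (7 : ℤ) ≠ 0 ∧
      cc k ≠ 0 ∧ dd k ≠ 0 := by
  have h1 := cc_ge k
  have h2 := dd_ge k
  have h3 := cc_lt_dd k
  refine ⟨by norm_num, by omega, by omega, by omega, by omega, by omega,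
    by norm_num, by norm_num, by omega, by omega⟩

lemma isD_one (k : ℕ) : IsDQuadruple (-1) 7 (cc k) (dd k) (nOne k) := by
  obtain ⟨h1, h2, h3, h4, h5, h6, h7, h8, h9, h10⟩ := quad_distinct k
  refine ⟨h1, h2, h3, h4, h5, h6, h7, h8, h9, h10,
    ⟨2 * tt k + 5, by simp only [nOne]; ring⟩,
    ⟨tt k + 5, by simp only [cc, nOne]; ring⟩,
    ⟨tt k, by simp only [dd, nOne]; ring⟩,
    ⟨5 * tt k + 9, by simp only [cc, nOne]; ring⟩,
    ⟨5 * tt k + 16, by simp only [dd, nOne]; ring⟩,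
    ⟨3 * (tt k) ^ 2 + 15 * tt k + 16, by simp only [cc, dd, nOne]; ring⟩⟩

lemma isD_two (k : ℕ) : IsDQuadruple (-1) 7 (cc k) (dd k) (nTwo k) := by
  obtain ⟨h1, h2, h3, h4, h5, h6, h7, h8, h9, h10⟩ := quad_distinct k
  refine ⟨h1, h2, h3, h4, h5, h6, h7, h8, h9, h10,
    ⟨ww k, by have := pell_inv k; simp only [nTwo]; linarith⟩,
    ⟨5 * tt k + 13, by simp only [cc, nTwo]; ring⟩,
    ⟨5 * tt k + 12, by simp only [dd, nTwo]; ring⟩,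
    ⟨7 * tt k + 15, by simp only [cc, nTwo]; ring⟩,
    ⟨7 * tt k + 20, by simp only [dd, nTwo]; ring⟩,
    ⟨3 * (tt k) ^ 2 + 15 * tt k + 20, by simp only [cc, dd, nTwo]; ring⟩⟩

lemma mem_qd_iff {z : ℤ} {k : ℕ} : z ∈ qd k ↔ z = -1 ∨ z = 7 ∨ z = cc k ∨ z = dd k := by
  simp [qd]

lemma qd_ne {k l : ℕ} (h : k < l) : qd k ≠ qd l := by
  intro heq
  have hmem : dd l ∈ qd k := by
    rw [heq]; exact mem_qd_iff.mpr (Or.inr (Or.inr (Or.inr rfl)))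
  have h1 := dd_ge l
  have h2 := dd_mono h
  have h3 := cc_lt_dd_of_lt h
  rcases mem_qd_iff.mp hmem with h' | h' | h' | h' <;> omega

lemma qd_injective : Function.Injective qd := by
  intro k l h
  rcases lt_trichotomy k l with h' | h' | h'
  · exact absurd h (qd_ne h')
  · exact h'
  · exact absurd h.symm (qd_ne h')

theorem stmt_3 :
    ∃ S : Set (Finset ℤ), S.Infinite ∧
      (∀ s ∈ S, ∃ a b c d n₁ n₂ : ℤ,
        s = {a, b, c, d} ∧ n₁ ≠ 0 ∧ n₂ ≠ 0 ∧ n₁ ≠ n₂ ∧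
        IsDQuadruple a b c d n₁ ∧ IsDQuadruple a b c d n₂) ∧
      (∀ s ∈ S, ∀ t ∈ S, s ≠ t → ¬ EquivQuad s t) := by
  refine ⟨Set.range qd, Set.infinite_range_of_injective qd_injective, ?_, ?_⟩
  · rintro s ⟨k, rfl⟩
    have ht := (pell_bounds k).2
    refine ⟨-1, 7, cc k, dd k, nOne k, nTwo k, rfl, ?_, ?_, ?_, isD_one k, isD_two k⟩
    · simp only [nOne]; nlinarith
    · simp only [nTwo]; nlinarith
    · simp only [nOne, nTwo]; intro hc; nlinarith
  · rintro s ⟨k, rfl⟩ t ⟨l, rfl⟩ hne ⟨u, hu, him⟩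
    have hcl := cc_ge l
    have hdl := dd_ge l
    -- every element x of qd k is mapped by (· * u) onto an element of qd l
    have key : ∀ x : ℤ, x ∈ qd k → ∃ z : ℤ, z ∈ qd l ∧ (x : ℚ) * u = (z : ℚ) := by
      intro x hx
      have hmem : (x : ℚ) * u ∈ (fun a : ℤ => (a : ℚ)) '' ((qd l : Set ℤ)) := by
        rw [← him]
        exact ⟨x, by simpa using hx, rfl⟩
      obtain ⟨z, hz, hze⟩ := hmem
      exact ⟨z, by simpa using hz, hze.symm⟩
    have hm1 : (-1 : ℤ) ∈ qd k := mem_qd_iff.mpr (Or.inl rfl)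
    have hm7 : (7 : ℤ) ∈ qd k := mem_qd_iff.mpr (Or.inr (Or.inl rfl))
    obtain ⟨y, hy, hyeq⟩ := key (-1) hm1
    -- hyeq : ((-1 : ℤ) : ℚ) * u = y, so y = -u
    have hyu : -u = (y : ℚ) := by push_cast at hyeq ⊢; linarith
    rcases mem_qd_iff.mp hy with hc | hc | hc | hc
    · -- y = -1, hence u = 1, hence qd k = qd l, contradiction
      have hu1 : u = 1 := by
        rw [hc] at hyu; push_cast at hyu; linarith
      subst hu1
      have him' : (fun a : ℤ => (a : ℚ)) '' ((qd k : Set ℤ))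
          = (fun a : ℤ => (a : ℚ)) '' ((qd l : Set ℤ)) := by
        rw [← him]
        simp
      have hset : ((qd k : Set ℤ)) = ((qd l : Set ℤ)) :=
        Set.image_injective.mpr (fun a b hab => by exact_mod_cast hab) him'
      exact hne (Finset.coe_injective hset)
    · -- y = 7, hence u = -7 : then 7 * u = -49 must be in qd l, impossible
      have hu7 : u = -7 := by
        rw [hc] at hyu; push_cast at hyu; linarith
      obtain ⟨z, hz, hzeq⟩ := key 7 hm7
      have hz49 : z = -49 := by
        rw [hu7] at hzeq
        have : ((z : ℤ) : ℚ) = ((-49 : ℤ) : ℚ) := by push_cast at hzeq ⊢; linarith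
        exact_mod_cast this.symm.symm
      rcases mem_qd_iff.mp hz with h' | h' | h' | h' <;> omega
    · -- y = cc l, hence u = -(cc l) : then 7 * u = -7 * cc l in qd l, impossible
      have huc : u = -(cc l : ℚ) := by rw [hc] at hyu; linarith
      obtain ⟨z, hz, hzeq⟩ := key 7 hm7
      have hz' : z = -7 * cc l := by
        rw [huc] at hzeq
        have : ((z : ℤ) : ℚ) = ((-7 * cc l : ℤ) : ℚ) := by push_cast at hzeq ⊢; linarith
        exact_mod_cast this
      rcases mem_qd_iff.mp hz with h' | h' | h' | h' <;> omega
    · -- y = dd l, analogous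
      have hud : u = -(dd l : ℚ) := by rw [hc] at hyu; linarith
      obtain ⟨z, hz, hzeq⟩ := key 7 hm7
      have hz' : z = -7 * dd l := by
        rw [hud] at hzeq
        have : ((z : ℤ) : ℚ) = ((-7 * dd l : ℤ) : ℚ) := by push_cast at hzeq ⊢; linarith
        exact_mod_cast this
      rcases mem_qd_iff.mp hz with h' | h' | h' | h' <;> omega
end

section
/- For every integer k and integer a such that the four integers a, a*k^2 - 2k - 2, a*(k+1)^2 - 2k, a*(2k+1)^2 - 8k - 4 are distinct and nonzero, the set {a, a*k^2-2k-2, a*(k+1)^2-2k, a*(2k+1)^2-8k-4} is a D(2a(2k+1)+1)-quadruple. -/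
theorem stmt_12 (a k : ℤ)
    (hdn : let b := a*k^2 - 2*k - 2; let c := a*(k+1)^2 - 2*k;
           let d := a*(2*k+1)^2 - 8*k - 4;
           a ≠ b ∧ a ≠ c ∧ a ≠ d ∧ b ≠ c ∧ b ≠ d ∧ c ≠ d ∧
           a ≠ 0 ∧ b ≠ 0 ∧ c ≠ 0 ∧ d ≠ 0)
    (hn : 2*a*(2*k+1) + 1 ≠ 0) :
    IsDQuadruple a (a*k^2 - 2*k - 2) (a*(k+1)^2 - 2*k) (a*(2*k+1)^2 - 8*k - 4)
      (2*a*(2*k+1) + 1) := by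
  obtain ⟨h1,h2,h3,h4,h5,h6,h7,h8,h9,h10⟩ := hdn
  refine ⟨h1,h2,h3,h4,h5,h6,h7,h8,h9,h10,
    ⟨a*k+1, by ring⟩, ⟨a*(k+1)+1, by ring⟩, ⟨a*(2*k+1)-1, by ring⟩,
    ⟨a*k*(k+1)-(2*k+1), by ring⟩, ⟨a*k*(2*k+1)-(4*k+3), by ring⟩,
    ⟨a*(k+1)*(2*k+1)-(4*k+1), by ring⟩⟩
end

section
/- For every integer r, every product of two distinct elements of the set {4r^4(r+2)^2, (r^3-4r+1)^2, (r^3+4r^2-1)^2, 4(2r-1)^2} is a perfect square, and the product of any two distinct elements plus n2 is a perfect square, where n2 = 16r^{10} + 96r^9 + 112r^8 - 192r^7 - 256r^6 + 192r^5 + 112r^4 - 96r^3 + 16r^2. -/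
theorem stmt_13 (r : ℤ) :
    let a := 4*r^4*(r+2)^2
    let b := (r^3 - 4*r + 1)^2
    let c := (r^3 + 4*r^2 - 1)^2
    let d := 4*(2*r - 1)^2
    let n₂ := 16*r^10 + 96*r^9 + 112*r^8 - 192*r^7 - 256*r^6 + 192*r^5
                + 112*r^4 - 96*r^3 + 16*r^2
    (∃ x : ℤ, a*b = x^2) ∧ (∃ x : ℤ, a*c = x^2) ∧ (∃ x : ℤ, a*d = x^2) ∧
    (∃ x : ℤ, b*c = x^2) ∧ (∃ x : ℤ, b*d = x^2) ∧ (∃ x : ℤ, c*d = x^2) ∧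
    (∃ x : ℤ, a*b + n₂ = x^2) ∧ (∃ x : ℤ, a*c + n₂ = x^2) ∧
    (∃ x : ℤ, a*d + n₂ = x^2) ∧ (∃ x : ℤ, b*c + n₂ = x^2) ∧
    (∃ x : ℤ, b*d + n₂ = x^2) ∧ (∃ x : ℤ, c*d + n₂ = x^2) := by
  refine ⟨⟨2*r^2*(r+2)*(r^3-4*r+1), by ring⟩,
    ⟨2*r^2*(r+2)*(r^3+4*r^2-1), by ring⟩,
    ⟨2*r^2*(r+2)*(2*(2*r-1)), by ring⟩,
    ⟨(r^3-4*r+1)*(r^3+4*r^2-1), by ring⟩,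
    ⟨(r^3-4*r+1)*(2*(2*r-1)), by ring⟩,
    ⟨(r^3+4*r^2-1)*(2*(2*r-1)), by ring⟩,
    ⟨2*r^6 + 4*r^5 - 4*r^4 + 2*r^3 + 12*r^2 - 4*r, by ring⟩,
    ⟨2*r^6 + 12*r^5 + 20*r^4 - 2*r^3 - 12*r^2 + 4*r, by ring⟩,
    ⟨4*r^5 + 12*r^4 + 4*r^3 - 12*r^2 + 4*r, by ring⟩,
    ⟨r^6 + 4*r^5 + 4*r^4 - 4*r^2 + 4*r - 1, by ring⟩,
    ⟨4*r^5 + 12*r^4 - 2*r^3 - 20*r^2 + 12*r - 2, by ring⟩,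
    ⟨4*r^5 + 12*r^4 - 2*r^3 - 4*r^2 - 4*r + 2, by ring⟩⟩
end
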